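/- Metric equivalence: if a_0, a_m > 0 and a_j ≥ 0 for 1 ≤ j ≤ m-1, then the metric g̃^m_c(h,h) = Σ_{j=0}^m a_j ġ^j_c(h,h) is uniformly equivalent to g^m_c(h,h) = ġ^0_c(h,h) + ġ^m_c(h,h): there is a constant C > 0, independent of c and h, with (1/C) g̃^m_c(h,h) ≤ g^m_c(h,h) ≤ C g̃^m_c(h,h) for all c ∈ R^{d×n}_* and h ∈ (ℝ^d)^n. -/

import Mathlib

open scoped BigOperators
open Finset

noncomputable section

variable {d n : ℕ}

/-- The `i`-th edge of a discrete closed curve. -/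
def edge (c : ZMod n → EuclideanSpace ℝ (Fin d)) (i : ZMod n) : EuclideanSpace ℝ (Fin d) :=
  c (i + 1) - c i

/-- The averaged vertex weight `μ_i = (|e_i| + |e_{i-1}|)/2`. -/
def mu (c : ZMod n → EuclideanSpace ℝ (Fin d)) (i : ZMod n) : ℝ :=
  (‖edge c i‖ + ‖edge c (i - 1)‖) / 2

/-- The total length `ℓ(c) = Σ_i |e_i|`. -/
def len [NeZero n] (c : ZMod n → EuclideanSpace ℝ (Fin d)) : ℝ :=
  ∑ i : ZMod n, ‖edge c i‖

/-- Discrete arc-length derivative `D_s^m h`. -/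
def Ds (c : ZMod n → EuclideanSpace ℝ (Fin d)) :
    ℕ → (ZMod n → EuclideanSpace ℝ (Fin d)) → ZMod n → EuclideanSpace ℝ (Fin d)
  | 0, h => h
  | (j + 1), h => fun i =>
      if Even j then (‖edge c i‖)⁻¹ • (Ds c j h (i + 1) - Ds c j h i)
      else (mu c i)⁻¹ • (Ds c j h i - Ds c j h (i - 1))

/-- The weight `μ_{i,m}`: `μ_i` for even `m`, `|e_i|` for odd `m`. -/
def muM (c : ZMod n → EuclideanSpace ℝ (Fin d)) (m : ℕ) (i : ZMod n) : ℝ :=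
  if Even m then mu c i else ‖edge c i‖

/-- The homogeneous discrete Sobolev energy `ġ^m_c(h,k)`. -/
def gdot [NeZero n] (c : ZMod n → EuclideanSpace ℝ (Fin d)) (m : ℕ)
    (h k : ZMod n → EuclideanSpace ℝ (Fin d)) : ℝ :=
  ∑ i : ZMod n, (len c) ^ (2 * (m : ℤ) - 3) *
    (inner ℝ (Ds c m h i) (Ds c m k i) : ℝ) * muM c m i

/-- The discrete Sobolev metric `g^m_c(h,k) = ġ^0_c(h,k) + ġ^m_c(h,k)`. -/
def gm [NeZero n] (c : ZMod n → EuclideanSpace ℝ (Fin d)) (m : ℕ)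
    (h k : ZMod n → EuclideanSpace ℝ (Fin d)) : ℝ :=
  gdot c 0 h k + gdot c m h k

end

/-! The intermediate energies are monotone: `ġ^j ≤ ġ^{j+1}` for `j ≥ 1`. Indeed `D_s^j h` has
weighted mean zero, so each of its values is bounded by its total variation around the cycle,
which is the `L¹` norm of `D_s^{j+1} h`; by Cauchy–Schwarz this is at most `ℓ(c)^{1/2}` times
the `L²` norm, and the factors of `ℓ(c)` exactly match the scaling of `ġ`. Hence every `ġ^j`,
`j ≤ m`, is bounded by `g^m = ġ^0 + ġ^m`, and conversely `ġ^0` and `ġ^m` each occur in the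
weighted sum with positive coefficient. -/

section Cycle

variable {n : ℕ} [NeZero n] {E : Type*} [SeminormedAddCommGroup E]

theorem norm_sub_le_sum_norm_sub_succ (f : ZMod n → E) (i k : ZMod n) :
    ‖f i - f k‖ ≤ ∑ p, ‖f (p + 1) - f p‖ := by
  classical
  set g : ℕ → E := fun s => f (k + s)
  set t := (i - k).val
  have ht : t < n := ZMod.val_lt _
  have hinj : Set.InjOn (fun s : ℕ => k + (s : ZMod n)) (range t) := by
    intro s hs s' hs' hss'
    rw [coe_range, Set.mem_Iio] at hs hs'
    simpa [ZMod.val_natCast_of_lt (hs.trans ht), ZMod.val_natCast_of_lt (hs'.trans ht)]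
      using congrArg ZMod.val (add_left_cancel hss')
  calc ‖f i - f k‖ = ‖g t - g 0‖ := by simp [g, t]
    _ = ‖∑ s ∈ range t, (g (s + 1) - g s)‖ := by rw [sum_range_sub]
    _ ≤ ∑ s ∈ range t, ‖g (s + 1) - g s‖ := norm_sum_le _ _
    _ = ∑ p ∈ (range t).image (fun s : ℕ => k + (s : ZMod n)), ‖f (p + 1) - f p‖ := by
      rw [sum_image hinj]
      simp only [g, Nat.cast_succ, add_assoc]
    _ ≤ ∑ p, ‖f (p + 1) - f p‖ := sum_le_univ_sum_of_nonneg fun _ => norm_nonneg _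

end Cycle

theorem norm_le_of_sum_smul_eq_zero {ι E : Type*} [Fintype ι] [SeminormedAddCommGroup E]
    [NormedSpace ℝ E] {w : ι → ℝ} {f : ι → E} {M : ℝ} (hw : ∀ k, 0 ≤ w k)
    (hW : 0 < ∑ k, w k) (hf : ∑ k, w k • f k = 0) (i : ι) (hM : ∀ k, ‖f i - f k‖ ≤ M) :
    ‖f i‖ ≤ M := by
  have hmean : (∑ k, w k) • f i = ∑ k, w k • (f i - f k) := by
    simp only [smul_sub, sum_sub_distrib, hf, sub_zero, sum_smul]
  refine le_of_mul_le_mul_left ?_ hW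
  calc (∑ k, w k) * ‖f i‖ = ‖(∑ k, w k) • f i‖ := by rw [norm_smul, Real.norm_of_nonneg hW.le]
    _ ≤ ∑ k, w k * ‖f i - f k‖ := by
      rw [hmean]
      refine (norm_sum_le _ _).trans_eq (sum_congr rfl fun k _ => ?_)
      rw [norm_smul, Real.norm_of_nonneg (hw k)]
    _ ≤ (∑ k, w k) * M := by
      rw [sum_mul]
      exact sum_le_sum fun k _ => mul_le_mul_of_nonneg_left (hM k) (hw k)

section DiscreteCurve

variable {d n : ℕ} {c : ZMod n → EuclideanSpace ℝ (Fin d)}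

theorem norm_edge_pos (hc : ∀ i, c i ≠ c (i + 1)) (i : ZMod n) : 0 < ‖edge c i‖ :=
  norm_pos_iff.2 (sub_ne_zero.2 (hc i).symm)

theorem mu_nonneg (i : ZMod n) : 0 ≤ mu c i := by unfold mu; positivity

theorem mu_pos (hc : ∀ i, c i ≠ c (i + 1)) (i : ZMod n) : 0 < mu c i :=
  half_pos (add_pos_of_pos_of_nonneg (norm_edge_pos hc i) (norm_nonneg _))

theorem muM_nonneg (m : ℕ) (i : ZMod n) : 0 ≤ muM c m i := by
  unfold muM; split
  · exact mu_nonneg i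
  · exact norm_nonneg _

theorem muM_succ_of_even {m : ℕ} (hm : Even m) (i : ZMod n) : muM c (m + 1) i = ‖edge c i‖ :=
  if_neg (Nat.even_add_one.not.2 (not_not.2 hm))

theorem muM_succ_of_not_even {m : ℕ} (hm : ¬Even m) (i : ZMod n) : muM c (m + 1) i = mu c i :=
  if_pos (Nat.even_add_one.2 hm)

variable (h : ZMod n → EuclideanSpace ℝ (Fin d))

-- `D_s^{m+1} h` is a forward difference quotient of `D_s^m h` for even `m`, a backward one
-- for odd `m`.
theorem exists_shift_sub_Ds_eq_muM_smul (hc : ∀ i, c i ≠ c (i + 1)) (m : ℕ) :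
    ∃ s : ZMod n, ∀ i, Ds c m h (i + 1) - Ds c m h i =
      muM c (m + 1) (i + s) • Ds c (m + 1) h (i + s) := by
  by_cases hm : Even m
  · refine ⟨0, fun i => ?_⟩
    simp only [add_zero, muM_succ_of_even hm, Ds, if_pos hm,
      smul_inv_smul₀ (norm_edge_pos hc i).ne']
  · refine ⟨1, fun i => ?_⟩
    simp only [muM_succ_of_not_even hm, Ds, if_neg hm, add_sub_cancel_right,
      smul_inv_smul₀ (mu_pos hc (i + 1)).ne']

variable [NeZero n]

theorem len_pos (hc : ∀ i, c i ≠ c (i + 1)) : 0 < len c :=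
  sum_pos (fun i _ => norm_edge_pos hc i) univ_nonempty

theorem sum_muM (m : ℕ) : ∑ i, muM c m i = len c := by
  unfold muM; split
  · have hshift := (Equiv.subRight (1 : ZMod n)).sum_comp fun i => ‖edge c i‖
    simp only [Equiv.subRight_apply] at hshift
    simp only [mu, ← sum_div, sum_add_distrib, hshift, len]
    ring
  · rfl

variable (c) in
theorem gdot_self (m : ℕ) :
    gdot c m h h = len c ^ (2 * (m : ℤ) - 3) * ∑ i, ‖Ds c m h i‖ ^ 2 * muM c m i := by
  simp only [gdot, mul_sum, real_inner_self_eq_norm_sq, mul_assoc]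

theorem gdot_self_nonneg (m : ℕ) :
    0 ≤ gdot c m h h := by
  rw [gdot_self]
  exact mul_nonneg (zpow_nonneg (sum_nonneg fun _ _ => norm_nonneg _) _)
    (sum_nonneg fun i _ => mul_nonneg (sq_nonneg _) (muM_nonneg m i))

theorem sum_muM_smul_Ds_succ (hc : ∀ i, c i ≠ c (i + 1)) (m : ℕ) :
    ∑ i, muM c (m + 1) i • Ds c (m + 1) h i = 0 := by
  obtain ⟨s, hs⟩ := exists_shift_sub_Ds_eq_muM_smul h hc m
  rw [← Equiv.sum_comp (Equiv.addRight s)]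
  simp only [Equiv.coe_addRight, ← hs, sum_sub_distrib]
  exact sub_eq_zero.2 (Equiv.sum_comp (Equiv.addRight 1) (Ds c m h))

theorem sum_norm_sub_Ds (hc : ∀ i, c i ≠ c (i + 1)) (m : ℕ) :
    ∑ i, ‖Ds c m h (i + 1) - Ds c m h i‖ = ∑ i, muM c (m + 1) i * ‖Ds c (m + 1) h i‖ := by
  obtain ⟨s, hs⟩ := exists_shift_sub_Ds_eq_muM_smul h hc m
  rw [← Equiv.sum_comp (Equiv.addRight s) fun i => muM c (m + 1) i * ‖Ds c (m + 1) h i‖]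
  simp only [Equiv.coe_addRight, hs, norm_smul, Real.norm_of_nonneg (muM_nonneg _ _)]

theorem gdot_succ_le_gdot_succ_succ (hc : ∀ i, c i ≠ c (i + 1)) (m : ℕ) :
    gdot c (m + 1) h h ≤ gdot c (m + 2) h h := by
  set L := len c
  set f := Ds c (m + 1) h
  set F := Ds c (m + 2) h
  set w := muM c (m + 2)
  set T := ∑ i, w i * ‖F i‖
  have hL : 0 < L := len_pos hc
  have hw : ∑ i, w i = L := sum_muM _
  have hf_le : ∀ i, ‖f i‖ ≤ T := fun i =>
    norm_le_of_sum_smul_eq_zero (muM_nonneg _) (by rwa [sum_muM])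
      (sum_muM_smul_Ds_succ h hc m) i fun k =>
        (norm_sub_le_sum_norm_sub_succ f i k).trans_eq (sum_norm_sub_Ds h hc _)
  have hT : T ^ 2 ≤ L * ∑ i, ‖F i‖ ^ 2 * w i := by
    rw [← hw]
    refine sum_sq_le_sum_mul_sum_of_sq_le_mul _ (fun i _ => muM_nonneg _ i)
      (fun i _ => mul_nonneg (sq_nonneg _) (muM_nonneg _ i)) fun i _ => le_of_eq ?_
    ring
  have hsum : ∑ i, ‖f i‖ ^ 2 * muM c (m + 1) i ≤ L ^ 2 * ∑ i, ‖F i‖ ^ 2 * w i :=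
    calc ∑ i, ‖f i‖ ^ 2 * muM c (m + 1) i ≤ ∑ i, T ^ 2 * muM c (m + 1) i :=
          sum_le_sum fun i _ => mul_le_mul_of_nonneg_right
            (pow_le_pow_left₀ (norm_nonneg _) (hf_le i) 2) (muM_nonneg _ i)
      _ = T ^ 2 * L := by rw [← mul_sum, sum_muM]
      _ ≤ L ^ 2 * ∑ i, ‖F i‖ ^ 2 * w i := by nlinarith
  have hpow : L ^ (2 * ((m + 2 : ℕ) : ℤ) - 3) = L ^ (2 * ((m + 1 : ℕ) : ℤ) - 3) * L ^ 2 := by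
    rw [← zpow_natCast L 2, ← zpow_add₀ hL.ne']
    push_cast
    ring_nf
  rw [gdot_self, gdot_self, hpow, mul_assoc]
  exact mul_le_mul_of_nonneg_left hsum (zpow_nonneg hL.le _)

theorem gdot_le_gdot_of_le {j m : ℕ} (hc : ∀ i, c i ≠ c (i + 1)) (hj : j ≠ 0) (hjm : j ≤ m) :
    gdot c j h h ≤ gdot c m h h := by
  induction m, hjm using Nat.le_induction with
  | base => exact le_rfl
  | succ m hjm ih =>
    obtain ⟨k, rfl⟩ : ∃ k, m = k + 1 := ⟨m - 1, by omega⟩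
    exact ih.trans (gdot_succ_le_gdot_succ_succ h hc k)

theorem gdot_le_gm {j m : ℕ} (hc : ∀ i, c i ≠ c (i + 1)) (hjm : j ≤ m) :
    gdot c j h h ≤ gm c m h h := by
  rcases Nat.eq_zero_or_pos j with rfl | hj
  · exact le_add_of_nonneg_right (gdot_self_nonneg h m)
  · exact (gdot_le_gdot_of_le h hc hj.ne' hjm).trans
      (le_add_of_nonneg_left (gdot_self_nonneg h 0))

end DiscreteCurve

theorem stmt_14_general (d n m : ℕ) [NeZero n] (a : ℕ → ℝ)
    (ha0 : 0 < a 0) (ham : 0 < a m)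
    (haj : ∀ j, 1 ≤ j → j ≤ m - 1 → 0 ≤ a j) :
    ∃ C > 0, ∀ (c h : ZMod n → EuclideanSpace ℝ (Fin d)),
      (∀ i : ZMod n, c i ≠ c (i + 1)) →
      (1 / C) * (∑ j ∈ Finset.range (m + 1), a j * gdot c j h h) ≤ gm c m h h ∧
      gm c m h h ≤ C * (∑ j ∈ Finset.range (m + 1), a j * gdot c j h h) := by
  have ha : ∀ j ∈ range (m + 1), 0 ≤ a j := fun j hj => by
    rcases Nat.eq_zero_or_pos j with rfl | hj0
    · exact ha0.le
    rcases (Nat.lt_succ_iff.1 (mem_range.1 hj)).eq_or_lt with rfl | hjm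
    · exact ham.le
    · exact haj j hj0 (by omega)
  have hA : 0 < ∑ j ∈ range (m + 1), a j :=
    ha0.trans_le (single_le_sum ha (mem_range.2 m.succ_pos))
  refine ⟨max (∑ j ∈ range (m + 1), a j) ((a 0)⁻¹ + (a m)⁻¹), lt_max_of_lt_left hA,
    fun c h hc => ?_⟩
  set G := ∑ j ∈ range (m + 1), a j * gdot c j h h
  have hgm : 0 ≤ gm c m h h := add_nonneg (gdot_self_nonneg h 0) (gdot_self_nonneg h m)
  have hG : 0 ≤ G := sum_nonneg fun j hj => mul_nonneg (ha j hj) (gdot_self_nonneg h j)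
  have hupper : G ≤ (∑ j ∈ range (m + 1), a j) * gm c m h h := by
    rw [sum_mul]
    exact sum_le_sum fun j hj => mul_le_mul_of_nonneg_left
      (gdot_le_gm h hc (Nat.lt_succ_iff.1 (mem_range.1 hj))) (ha j hj)
  have hlower : gm c m h h ≤ ((a 0)⁻¹ + (a m)⁻¹) * G := by
    have hterm : ∀ j ∈ range (m + 1), a j * gdot c j h h ≤ G :=
      fun j hj => single_le_sum (fun k hk => mul_nonneg (ha k hk) (gdot_self_nonneg h k)) hj
    rw [add_mul]
    exact add_le_add ((le_inv_mul_iff₀ ha0).2 (hterm 0 (mem_range.2 m.succ_pos)))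
      ((le_inv_mul_iff₀ ham).2 (hterm m (mem_range.2 m.lt_succ_self)))
  constructor
  · rw [one_div, inv_mul_le_iff₀ (lt_max_of_lt_left hA)]
    exact hupper.trans (mul_le_mul_of_nonneg_right (le_max_left _ _) hgm)
  · exact hlower.trans (mul_le_mul_of_nonneg_right (le_max_right _ _) hG)

/-- Uniform equivalence of `g^m` with any metric `Σ_j a_j ġ^j` having positive
lowest- and highest-order coefficients. -/
theorem stmt_14 (d n m : ℕ) [NeZero n] (hn : 3 ≤ n) (hm : 1 ≤ m) (a : ℕ → ℝ)
    (ha0 : 0 < a 0) (ham : 0 < a m)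
    (haj : ∀ j, 1 ≤ j → j ≤ m - 1 → 0 ≤ a j) :
    ∃ C > 0, ∀ (c h : ZMod n → EuclideanSpace ℝ (Fin d)),
      (∀ i : ZMod n, c i ≠ c (i + 1)) →
      (1 / C) * (∑ j ∈ Finset.range (m + 1), a j * gdot c j h h) ≤ gm c m h h ∧
      gm c m h h ≤ C * (∑ j ∈ Finset.range (m + 1), a j * gdot c j h h) :=
  stmt_14_general d n m a ha0 ham haj
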